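/- arXiv:1509.04190 — 7 statements merged into one kernel-verified Lean document; each statement's English description precedes it below -/
import Mathlib

section
/- For every integer n ≥ 1, the n-th Bernoulli number satisfies B_n = n! · Σ_{j=1}^{n} (-1)^j Σ over tuples (i_1,…,i_n) of non-negative integers with i_1+⋯+i_n = j and i_1+2i_2+⋯+n·i_n = n of the multinomial coefficient j!/(i_1!⋯i_n!) divided by 2!^{i_1}·3!^{i_2}⋯(n+1)!^{i_n}. -/
/-!
Write `E = (exp X - 1) / X = ∑ₖ Xᵏ / (k + 1)!`, so that the Bernoulli series is
`1 / E = 1 / (1 + (E - 1))`. As `E - 1` has no constant term, the coefficient of `Xⁿ` in it is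
the finite alternating geometric sum `∑_{j ≤ n} (-1)ʲ [Xⁿ] (E - 1)ʲ`, and `[Xⁿ] (E - 1)ʲ`
only depends on the truncation `∑_{k=1}^n Xᵏ / (k + 1)!`, whose `j`-th power is expanded by the
multinomial theorem into the sum over `(i₁, …, iₙ)`.
-/

open PowerSeries Finset

namespace PowerSeries

variable {R : Type*} [CommRing R]

theorem coeff_eq_of_X_pow_dvd_sub {n : ℕ} {f g : R⟦X⟧} (h : X ^ (n + 1) ∣ f - g) :
    coeff n f = coeff n g :=
  sub_eq_zero.mp (by simpa using X_pow_dvd_iff.mp h n n.lt_succ_self)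

theorem coeff_eq_sum_neg_pow_of_mul_one_add_eq_one {f g : R⟦X⟧} (hf : constantCoeff f = 0)
    (hg : g * (1 + f) = 1) (n : ℕ) :
    coeff n g = ∑ j ∈ range (n + 1), (-1) ^ j * coeff n (f ^ j) := by
  have hX : X ∣ -f := X_dvd_iff.mpr (by simp [hf])
  have hgeom : g - ∑ j ∈ range (n + 1), (-f) ^ j = g * (-f) ^ (n + 1) := by
    calc g - ∑ j ∈ range (n + 1), (-f) ^ j
        = g * (1 - (∑ j ∈ range (n + 1), (-f) ^ j) * (1 - -f)) := by
          linear_combination (∑ j ∈ range (n + 1), (-f) ^ j) * hg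
      _ = g * (-f) ^ (n + 1) := by rw [geom_sum_mul_neg, sub_sub_cancel]
  rw [coeff_eq_of_X_pow_dvd_sub (hgeom ▸ dvd_mul_of_dvd_right (pow_dvd_pow_of_dvd hX _) g),
    map_sum]
  refine sum_congr rfl fun j _ => ?_
  rw [neg_pow, ← map_one C, ← map_neg, ← map_pow, coeff_C_mul]

theorem coeff_pow_eq_sum_piAntidiag {f : R⟦X⟧} (hf : constantCoeff f = 0) (n j : ℕ) :
    coeff n (f ^ j) = ∑ k ∈ piAntidiag univ j,
      if ∑ t : Fin n, ((t : ℕ) + 1) * k t = n then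
        (Nat.multinomial univ k : R) * ∏ t : Fin n, coeff ((t : ℕ) + 1) f ^ k t
      else 0 := by
  set T : R⟦X⟧ := ∑ t : Fin n, C (coeff ((t : ℕ) + 1) f) * X ^ ((t : ℕ) + 1)
  have hT : X ^ (n + 1) ∣ f - T := by
    refine X_pow_dvd_iff.mpr fun m hm => ?_
    rw [map_sub, sub_eq_zero]
    cases m with
    | zero => simpa [T, coeff_X_pow] using hf
    | succ m =>
      rw [map_sum, Fintype.sum_eq_single ⟨m, by omega⟩]
      · simp
      · intro t ht
        rw [coeff_C_mul_X_pow, if_neg]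
        exact fun h => ht (Fin.ext (by simpa using h.symm))
  rw [coeff_eq_of_X_pow_dvd_sub (hT.trans (sub_dvd_pow_sub_pow f T j)),
    sum_pow_eq_sum_piAntidiag, map_sum]
  refine sum_congr rfl fun k _ => ?_
  simp_rw [mul_pow, ← map_pow, ← pow_mul, prod_mul_distrib, ← map_prod, prod_pow_eq_pow_sum,
    ← map_natCast C, ← mul_assoc, ← map_mul, coeff_C_mul_X_pow, eq_comm (a := n)]

end PowerSeries

theorem Finset.sum_piAntidiag_univ_eq_sum_fin {ι M : Type*} [Fintype ι] [DecidableEq ι]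
    [AddCommMonoid M] {N j : ℕ} (hj : j ≤ N) (g : (ι → ℕ) → M) :
    ∑ k ∈ piAntidiag univ j, g k =
      ∑ i : ι → Fin (N + 1), if ∑ t, (i t : ℕ) = j then g fun t => i t else 0 := by
  rw [← sum_filter]
  symm
  refine sum_nbij (fun i t => (i t : ℕ)) (fun i hi => ?_) (fun i _ i' _ h => ?_) (fun k hk => ?_)
    fun _ _ => rfl
  · simpa using (mem_filter.mp hi).2
  · exact Fin.val_injective.comp_left h
  · obtain ⟨hsum, -⟩ := mem_piAntidiag.mp hk
    have hle : ∀ t, k t ≤ N := fun t =>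
      (single_le_sum (fun _ _ => Nat.zero_le _) (mem_univ t)).trans (hsum.trans_le hj)
    exact ⟨fun t => ⟨k t, Nat.lt_succ_of_le (hle t)⟩, by simpa using hsum, rfl⟩

theorem Nat.cast_multinomial {α K : Type*} [Semifield K] [CharZero K] (s : Finset α)
    (f : α → ℕ) :
    (Nat.multinomial s f : K) =
      ((∑ i ∈ s, f i).factorial : K) / ∏ i ∈ s, ((f i).factorial : K) := by
  rw [← Nat.multinomial_spec, Nat.cast_mul, Nat.cast_prod, mul_div_cancel_left₀]
  exact prod_ne_zero_iff.mpr fun i _ => Nat.cast_ne_zero.mpr (Nat.factorial_ne_zero _)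

noncomputable def expSubOneDivX : ℚ⟦X⟧ := mk fun k => 1 / ((k + 1).factorial : ℚ)

theorem X_mul_expSubOneDivX : X * expSubOneDivX = exp ℚ - 1 := by
  ext (_ | m) <;> simp [expSubOneDivX, coeff_succ_X_mul, coeff_exp]

theorem bernoulliPowerSeries_mul_expSubOneDivX :
    bernoulliPowerSeries ℚ * expSubOneDivX = 1 :=
  X_mul_cancel <| by
    rw [mul_left_comm, X_mul_expSubOneDivX, bernoulliPowerSeries_mul_exp_sub_one, mul_one]

theorem constantCoeff_expSubOneDivX_sub_one : constantCoeff (expSubOneDivX - 1) = 0 := by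
  rw [← coeff_zero_eq_constantCoeff_apply]
  simp [expSubOneDivX]

theorem coeff_expSubOneDivX_sub_one_succ (k : ℕ) :
    coeff (k + 1) (expSubOneDivX - 1) = ((k + 2).factorial : ℚ)⁻¹ := by
  simp [expSubOneDivX, coeff_one]

theorem coeff_expSubOneDivX_sub_one_pow {n j : ℕ} (hj : j ≤ n) :
    coeff n ((expSubOneDivX - 1) ^ j) = ∑ i : Fin n → Fin (n + 1),
      if (∑ t : Fin n, (i t : ℕ)) = j ∧ (∑ t : Fin n, ((t : ℕ) + 1) * (i t : ℕ)) = n then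
        (j.factorial : ℚ) / (∏ t : Fin n, ((i t : ℕ).factorial : ℚ)) /
          (∏ t : Fin n, (((t : ℕ) + 2).factorial : ℚ) ^ (i t : ℕ))
      else 0 := by
  rw [coeff_pow_eq_sum_piAntidiag constantCoeff_expSubOneDivX_sub_one,
    sum_piAntidiag_univ_eq_sum_fin hj]
  refine sum_congr rfl fun i _ => ?_
  rw [ite_and]
  split_ifs with hsum <;> try rfl
  simp only [Nat.cast_multinomial, hsum, coeff_expSubOneDivX_sub_one_succ, inv_pow,
    prod_inv_distrib, div_eq_mul_inv]

theorem bernoulli_eq_factorial_mul_coeff (n : ℕ) :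
    bernoulli n = n.factorial * coeff n (bernoulliPowerSeries ℚ) := by
  simp [bernoulliPowerSeries, mul_div_cancel₀, Nat.factorial_ne_zero]

theorem bernoulli_closed_form_JeongKimSon (n : ℕ) (hn : 1 ≤ n) :
    bernoulli n = (n.factorial : ℚ) * ∑ j ∈ Finset.Icc 1 n, (-1 : ℚ) ^ j *
      ∑ i : Fin n → Fin (n + 1),
        if (∑ t : Fin n, (i t : ℕ)) = j ∧ (∑ t : Fin n, ((t : ℕ) + 1) * (i t : ℕ)) = n then
          (j.factorial : ℚ) / (∏ t : Fin n, ((i t : ℕ).factorial : ℚ)) /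
            (∏ t : Fin n, (((t : ℕ) + 2).factorial : ℚ) ^ (i t : ℕ))
        else 0 := by
  have hinv : bernoulliPowerSeries ℚ * (1 + (expSubOneDivX - 1)) = 1 := by
    rw [add_sub_cancel, bernoulliPowerSeries_mul_expSubOneDivX]
  rw [bernoulli_eq_factorial_mul_coeff,
    coeff_eq_sum_neg_pow_of_mul_one_add_eq_one constantCoeff_expSubOneDivX_sub_one hinv,
    range_eq_Ico, sum_eq_sum_Ico_succ_bot n.succ_pos, pow_zero, pow_zero, one_mul, coeff_one,
    if_neg (by omega), zero_add, zero_add, Nat.succ_eq_add_one, Ico_add_one_right_eq_Icc]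
  exact congrArg _ <| sum_congr rfl fun j hj => by
    rw [coeff_expSubOneDivX_sub_one_pow (mem_Icc.mp hj).2]
end

section
/- For every integer n ≥ 1, the Bernoulli polynomial satisfies B_n(u) = Σ_{k=1}^{n} k! Σ_{r+s=k} Σ_{ℓ+m=n} (-1)^m C(n,ℓ) · (ℓ!/(ℓ+r)!) · (m!/(m+s)!) · [Σ_{i=0}^{r} Σ_{j=0}^{s} (-1)^{i+j} C(ℓ+r, r−i) C(m+s, s−j) S(ℓ+i, i) S(m+j, j)] · u^{m+s} (1−u)^{ℓ+r}. -/
/-- Stirling numbers of the second kind, via the standard recurrence. -/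
def stirling : ℕ → ℕ → ℕ
  | 0, 0 => 1
  | 0, _ + 1 => 0
  | _ + 1, 0 => 0
  | n + 1, k + 1 => (k + 1) * stirling n (k + 1) + stirling n k

/-!
Put `g(x) = 1 - (eˣ - 1)/x` and `w(x) = (1 - u) g((1 - u)x) + u g(-ux)`. Then
`x (1 - w(x)) = e^{-ux} (eˣ - 1)`, so the exponential generating function `x e^{ux}/(eˣ - 1)` of
the Bernoulli polynomials is `1/(1 - w) = ∑ₖ wᵏ`, and as `w(0) = 0` only the terms `k ≤ n`
contribute to the coefficient of `xⁿ`. Expanding `wᵏ` binomially leaves the coefficients of the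
powers of `g`, which come from `x^r g(x)^r = (x - (eˣ - 1))^r` and
`(eˣ - 1)^i = i! ∑_N S(N, i) x^N / N!`.
-/

open PowerSeries Nat Finset

theorem factorial_mul_coeff_exp_sub_one_pow {A : Type*} [CommRing A] [Algebra ℚ A] (n k : ℕ) :
    (n ! : A) * coeff n ((exp A - 1) ^ k) = k ! * stirling n k := by
  induction n generalizing k with
  | zero =>
    cases k <;> simp [stirling]
  | succ n ih =>
    cases k with
    | zero => simp [stirling, coeff_one]
    | succ k =>
      have hderiv : d⁄dX A ((exp A - 1) ^ (k + 1))
          = (k + 1 : A) • ((exp A - 1) ^ (k + 1) + (exp A - 1) ^ k) := by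
        rw [Derivation.leibniz_pow, map_sub, derivative_exp, Derivation.map_one_eq_zero, sub_zero,
          add_tsub_cancel_right, smul_eq_mul, ← Nat.cast_smul_eq_nsmul A]
        push_cast
        congr 1
        ring
      calc ((n + 1)! : A) * coeff (n + 1) ((exp A - 1) ^ (k + 1))
          = n ! * coeff n (d⁄dX A ((exp A - 1) ^ (k + 1))) := by
            rw [coeff_derivative, factorial_succ]; push_cast; ring
        _ = (k + 1 : A) *
              (n ! * coeff n ((exp A - 1) ^ (k + 1)) + n ! * coeff n ((exp A - 1) ^ k)) := by
            rw [hderiv, coeff_smul, smul_eq_mul, map_add]; ring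
        _ = (k + 1)! * stirling (n + 1) (k + 1) := by
            rw [ih, ih, stirling, factorial_succ]; push_cast; ring

theorem factorial_mul_coeff_X_sub_exp_sub_one_pow {A : Type*} [CommRing A] [Algebra ℚ A]
    (l r : ℕ) :
    ((l + r)! : A) * coeff (l + r) ((X - (exp A - 1)) ^ r) =
      r ! * ∑ i ∈ range (r + 1),
        (-1) ^ i * ((l + r).choose (r - i) : A) * stirling (l + i) i := by
  rw [sub_eq_neg_add, add_pow, map_sum, mul_sum, mul_sum]
  refine sum_congr rfl fun i hi => ?_
  have hir : i ≤ r := Nat.lt_succ_iff.mp (mem_range.mp hi)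
  have hcoeff : coeff (l + r) ((-(exp A - 1)) ^ i * X ^ (r - i) * (r.choose i : A⟦X⟧)) =
      (-1 : A) ^ i * r.choose i * coeff (l + i) ((exp A - 1) ^ i) := by
    have hterm : (-(exp A - 1)) ^ i * X ^ (r - i) * (r.choose i : A⟦X⟧) =
        C ((-1 : A) ^ i * r.choose i) * ((exp A - 1) ^ i * X ^ (r - i)) := by
      rw [neg_pow, map_mul, map_pow, map_neg, map_one, map_natCast]
      ring
    rw [hterm, coeff_C_mul, show l + r = l + i + (r - i) by omega, coeff_mul_X_pow]
  have hfac : (l + r)! = (l + r).choose (r - i) * (r - i)! * (l + i)! := by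
    rw [← Nat.choose_mul_factorial_mul_factorial (show r - i ≤ l + r by omega),
      show l + r - (r - i) = l + i by omega]
  have hfac' : (r - i)! * r.choose i * i ! = r ! := by
    rw [← Nat.choose_mul_factorial_mul_factorial hir]; ring
  calc ((l + r)! : A) * coeff (l + r) ((-(exp A - 1)) ^ i * X ^ (r - i) * (r.choose i : A⟦X⟧))
      = (-1) ^ i * (l + r).choose (r - i) * ((r - i)! * r.choose i : ℕ)
          * ((l + i)! * coeff (l + i) ((exp A - 1) ^ i)) := by
        rw [hcoeff, hfac]; push_cast; ring
    _ = r ! * ((-1) ^ i * ((l + r).choose (r - i) : A) * stirling (l + i) i) := by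
        rw [factorial_mul_coeff_exp_sub_one_pow, ← hfac']; push_cast; ring

theorem coeff_eq_sum_coeff_pow_of_mul_one_sub_eq_one {R : Type*} [CommRing R] {f w : R⟦X⟧}
    (hfw : f * (1 - w) = 1) (hw : constantCoeff w = 0) (n : ℕ) :
    coeff n f = ∑ k ∈ range (n + 1), coeff n (w ^ k) := by
  have hf : f = ∑ k ∈ range (n + 1), w ^ k + f * w ^ (n + 1) := by
    calc f = f * ((1 - w) * ∑ k ∈ range (n + 1), w ^ k + w ^ (n + 1)) := by
          rw [mul_neg_geom_sum, sub_add_cancel, mul_one]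
      _ = _ := by rw [mul_add, ← mul_assoc, hfw, one_mul]
  have htail : coeff n (f * w ^ (n + 1)) = 0 := by
    have hdvd : (X : R⟦X⟧) ^ (n + 1) ∣ f * w ^ (n + 1) :=
      dvd_mul_of_dvd_right (pow_dvd_pow_of_dvd (X_dvd_iff.mpr hw) _) f
    exact X_pow_dvd_iff.mp hdvd n n.lt_succ_self
  conv_lhs => rw [hf]
  rw [map_add, htail, add_zero, map_sum]

theorem coeff_C_mul_rescale_pow {R : Type*} [CommSemiring R] (a c : R) (f : R⟦X⟧) (l r : ℕ) :
    coeff l ((C a * rescale c f) ^ r) = a ^ r * c ^ l * coeff l (f ^ r) := by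
  rw [mul_pow, ← map_pow, ← map_pow, coeff_C_mul, coeff_rescale, mul_assoc]

noncomputable def oneSubExpSubOneDivX : ℚ⟦X⟧ := mk fun n => coeff (n + 1) (X - (exp ℚ - 1))

theorem X_mul_oneSubExpSubOneDivX : X * oneSubExpSubOneDivX = X - (exp ℚ - 1) := by
  rw [oneSubExpSubOneDivX, ← sub_const_eq_X_mul_shift]
  simp

theorem factorial_mul_coeff_oneSubExpSubOneDivX_pow (l r : ℕ) :
    ((l + r)! : ℚ) * coeff l (oneSubExpSubOneDivX ^ r) =
      r ! * ∑ i ∈ range (r + 1),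
        (-1) ^ i * ((l + r).choose (r - i) : ℚ) * stirling (l + i) i := by
  rw [← coeff_X_pow_mul _ r l, ← mul_pow, X_mul_oneSubExpSubOneDivX,
    factorial_mul_coeff_X_sub_exp_sub_one_pow]

theorem constantCoeff_oneSubExpSubOneDivX : constantCoeff oneSubExpSubOneDivX = 0 := by
  simp [oneSubExpSubOneDivX, ← coeff_zero_eq_constantCoeff_apply]

noncomputable def bernoulliRatio (u : ℚ) : ℚ⟦X⟧ :=
  C (1 - u) * rescale (1 - u) oneSubExpSubOneDivX + C u * rescale (-u) oneSubExpSubOneDivX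

theorem X_mul_one_sub_bernoulliRatio (u : ℚ) :
    X * (1 - bernoulliRatio u) = rescale (-u) (exp ℚ) * (exp ℚ - 1) := by
  have hX : ∀ c : ℚ,
      X * (C c * rescale c oneSubExpSubOneDivX) = C c * X - (rescale c (exp ℚ) - 1) := by
    intro c
    rw [← mul_assoc, mul_comm X, ← rescale_X, ← map_mul, X_mul_oneSubExpSubOneDivX]
    simp
  have hexp : rescale (-u) (exp ℚ) * exp ℚ = rescale (1 - u) (exp ℚ) := by
    rw [show 1 - u = -u + 1 by ring, ← exp_mul_exp_eq_exp_add, rescale_one]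
    rfl
  have hneg : C u * rescale (-u) oneSubExpSubOneDivX =
      -(C (-u) * rescale (-u) oneSubExpSubOneDivX) := by
    rw [map_neg, neg_mul, neg_neg]
  rw [bernoulliRatio, hneg, ← sub_eq_add_neg, mul_sub, mul_sub, hX, hX, mul_sub, mul_one, hexp]
  simp only [map_sub, map_neg, map_one]
  ring

theorem constantCoeff_bernoulliRatio (u : ℚ) : constantCoeff (bernoulliRatio u) = 0 := by
  rw [← coeff_zero_eq_constantCoeff_apply, bernoulliRatio, map_add, coeff_C_mul, coeff_C_mul,
    coeff_rescale, coeff_rescale, coeff_zero_eq_constantCoeff_apply,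
    constantCoeff_oneSubExpSubOneDivX]
  ring

noncomputable def bernoulliEGF (u : ℚ) : ℚ⟦X⟧ :=
  mk fun n => (Polynomial.bernoulli n).eval u / n !

theorem bernoulliEGF_mul_one_sub_bernoulliRatio (u : ℚ) :
    bernoulliEGF u * (1 - bernoulliRatio u) = 1 := by
  have hgen : bernoulliEGF u * (exp ℚ - 1) = X * rescale u (exp ℚ) := by
    rw [← Polynomial.bernoulli_generating_function u, bernoulliEGF]
    congr 1
    ext n
    simp [div_eq_inv_mul]
  refine mul_left_cancel₀ (X_ne_zero (R := ℚ)) ?_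
  calc X * (bernoulliEGF u * (1 - bernoulliRatio u))
      = bernoulliEGF u * (exp ℚ - 1) * rescale (-u) (exp ℚ) := by
        rw [mul_left_comm, X_mul_one_sub_bernoulliRatio]; ring
    _ = X * 1 := by
        rw [hgen, mul_assoc, exp_mul_exp_eq_exp_add, add_neg_cancel, rescale_zero]
        simp

theorem coeff_bernoulliRatio_pow (u : ℚ) (n k : ℕ) :
    coeff n (bernoulliRatio u ^ k) =
      ∑ rs ∈ antidiagonal k, ∑ lm ∈ antidiagonal n, (k.choose rs.1 : ℚ) *
        ((1 - u) ^ rs.1 * (1 - u) ^ lm.1 * coeff lm.1 (oneSubExpSubOneDivX ^ rs.1)) *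
        (u ^ rs.2 * (-u) ^ lm.2 * coeff lm.2 (oneSubExpSubOneDivX ^ rs.2)) := by
  rw [bernoulliRatio, (Commute.all _ _).add_pow', map_sum]
  refine sum_congr rfl fun rs _ => ?_
  rw [map_nsmul, coeff_mul, nsmul_eq_mul, mul_sum]
  simp only [coeff_C_mul_rescale_pow, mul_assoc]

theorem factorial_mul_coeff_bernoulliRatio_pow (u : ℚ) (n k : ℕ) :
    (n ! : ℚ) * coeff n (bernoulliRatio u ^ k) =
      k ! * ∑ rs ∈ antidiagonal k, ∑ lm ∈ antidiagonal n,
          (-1 : ℚ) ^ lm.2 * (n.choose lm.1 : ℚ) *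
            ((lm.1 ! : ℚ) / ((lm.1 + rs.1)! : ℚ)) * ((lm.2 ! : ℚ) / ((lm.2 + rs.2)! : ℚ)) *
            (∑ i ∈ range (rs.1 + 1), ∑ j ∈ range (rs.2 + 1),
              (-1 : ℚ) ^ (i + j) * ((lm.1 + rs.1).choose (rs.1 - i) : ℚ) *
                ((lm.2 + rs.2).choose (rs.2 - j) : ℚ) *
                (stirling (lm.1 + i) i : ℚ) * (stirling (lm.2 + j) j : ℚ)) *
            u ^ (lm.2 + rs.2) * (1 - u) ^ (lm.1 + rs.1) := by
  rw [coeff_bernoulliRatio_pow, mul_sum, mul_sum]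
  refine sum_congr rfl fun ⟨r, s⟩ hrs => ?_
  rw [mul_sum, mul_sum]
  refine sum_congr rfl fun ⟨l, m⟩ hlm => ?_
  rw [HasAntidiagonal.mem_antidiagonal] at hrs hlm
  subst hrs hlm
  dsimp only
  have hx := eq_div_of_mul_eq (by positivity)
    ((mul_comm _ _).trans (factorial_mul_coeff_oneSubExpSubOneDivX_pow l r))
  have hy := eq_div_of_mul_eq (by positivity)
    ((mul_comm _ _).trans (factorial_mul_coeff_oneSubExpSubOneDivX_pow m s))
  have hT :
      (∑ i ∈ range (r + 1), (-1) ^ i * ((l + r).choose (r - i) : ℚ) * stirling (l + i) i) *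
        ∑ j ∈ range (s + 1), (-1) ^ j * ((m + s).choose (s - j) : ℚ) * stirling (m + j) j =
      ∑ i ∈ range (r + 1), ∑ j ∈ range (s + 1),
        (-1 : ℚ) ^ (i + j) * ((l + r).choose (r - i) : ℚ) * ((m + s).choose (s - j) : ℚ) *
          (stirling (l + i) i : ℚ) * (stirling (m + j) j : ℚ) := by
    rw [sum_mul_sum]
    exact sum_congr rfl fun i _ => sum_congr rfl fun j _ => by ring
  have hn := Nat.add_choose_mul_factorial_mul_factorial l m
  have hk := Nat.add_choose_mul_factorial_mul_factorial r s
  rw [← Nat.choose_symm_add] at hn hk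
  rw [← hT, hx, hy, ← hn, ← hk, neg_pow u]
  push_cast
  ring

theorem bernoulliPoly_closed_form_QiChapman (n : ℕ) (hn : 1 ≤ n) (u : ℚ) :
    (Polynomial.bernoulli n).eval u =
      ∑ k ∈ Finset.Icc 1 n, (k.factorial : ℚ) *
        ∑ rs ∈ Finset.HasAntidiagonal.antidiagonal k, ∑ lm ∈ Finset.HasAntidiagonal.antidiagonal n,
          (-1 : ℚ) ^ lm.2 * (n.choose lm.1 : ℚ) *
            ((lm.1.factorial : ℚ) / ((lm.1 + rs.1).factorial : ℚ)) *
            ((lm.2.factorial : ℚ) / ((lm.2 + rs.2).factorial : ℚ)) *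
            (∑ i ∈ Finset.range (rs.1 + 1), ∑ j ∈ Finset.range (rs.2 + 1),
              (-1 : ℚ) ^ (i + j) * ((lm.1 + rs.1).choose (rs.1 - i) : ℚ) *
                ((lm.2 + rs.2).choose (rs.2 - j) : ℚ) *
                (stirling (lm.1 + i) i : ℚ) * (stirling (lm.2 + j) j : ℚ)) *
            u ^ (lm.2 + rs.2) * (1 - u) ^ (lm.1 + rs.1) := by
  have heval : (Polynomial.bernoulli n).eval u = n ! * coeff n (bernoulliEGF u) := by
    rw [bernoulliEGF, coeff_mk]
    field_simp
  rw [heval, coeff_eq_sum_coeff_pow_of_mul_one_sub_eq_one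
      (bernoulliEGF_mul_one_sub_bernoulliRatio u) (constantCoeff_bernoulliRatio u),
    mul_sum, range_eq_Ico, sum_eq_sum_Ico_succ_bot (by omega), pow_zero, coeff_one,
    if_neg (by omega), mul_zero, zero_add, Ico_add_one_right_eq_Icc]
  exact sum_congr rfl fun k _ => factorial_mul_coeff_bernoulliRatio_pow u n k
end

section
/- For every integer n ≥ 1, the Bernoulli polynomial satisfies B_n(u) = (-1)^n times the determinant of the n×n matrix whose (ℓ,m)-entry, for 1 ≤ ℓ ≤ n and 0 ≤ m ≤ n−1, is (1/(ℓ+1)) C(ℓ+1, m) [(1−u)^{ℓ−m+1} − (−u)^{ℓ−m+1}], under the conventions C(0,0)=1 and C(p,q)=0 for q > p ≥ 0. -/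
/-!
The vector `v = (B_0(u), …, B_{n-1}(u))` solves `M v = -B_n(u) e_n`, where `M` is the matrix of
the statement. Row `ℓ` of this system is the addition formula `B_p(u + y) = ∑ C(p,j) B_j(u) y^{p-j}`
(read off from the generating function, `G_{u+y}(t) = G_u(t) e^{yt}`) with `p = ℓ + 1`, taken at
`y = 1 - u` minus `y = -u`: the difference `B_p(1) - B_p(0)` vanishes for `p ≥ 2`. Since `M` is lower
Hessenberg with unit superdiagonal, the cofactor of its bottom-left entry is `(-1)^(n-1)`, and
Cramer's rule for the unknown `B_0(u) = 1` gives `det M = (-1)^n B_n(u)`.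
-/

open Finset Matrix
open scoped Nat

namespace Polynomial

open PowerSeries in
theorem bernoulli_eval_add (p : ℕ) (x y : ℚ) :
    (bernoulli p).eval (x + y) =
      ∑ j ∈ range (p + 1), (p.choose j : ℚ) * (bernoulli j).eval x * y ^ (p - j) := by
  let G : ℚ → ℚ⟦X⟧ := fun t => mk fun n => aeval t ((1 / n ! : ℚ) • bernoulli n)
  have hG : G (x + y) = G x * rescale y (exp ℚ) := by
    have h_ne : exp ℚ - 1 ≠ 0 := fun h => by simpa using congr(PowerSeries.coeff 1 $h)
    refine mul_right_cancel₀ h_ne ?_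
    rw [bernoulli_generating_function, mul_right_comm, bernoulli_generating_function, mul_assoc,
      exp_mul_exp_eq_exp_add, add_comm]
  have h := congr(PowerSeries.coeff p $hG)
  rw [PowerSeries.coeff_mul, Nat.sum_antidiagonal_eq_sum_range_succ_mk] at h
  simp only [G, coeff_mk, coeff_rescale, coeff_exp, coe_aeval_eq_eval, eval_smul, one_div,
    smul_eq_mul, Algebra.algebraMap_self, RingHom.id_apply] at h
  rw [inv_mul_eq_iff_eq_mul₀ (by positivity), mul_sum] at h
  rw [h]
  refine sum_congr rfl fun j hj => ?_
  rw [Nat.cast_choose ℚ (mem_range_succ_iff.1 hj)]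
  field_simp

theorem sum_choose_mul_sub_pow_mul_bernoulli_eval {p : ℕ} (hp : p ≠ 1) (u : ℚ) :
    ∑ j ∈ range (p + 1), (p.choose j : ℚ) * ((1 - u) ^ (p - j) - (-u) ^ (p - j)) *
      (bernoulli j).eval u = 0 := by
  have h_add (y : ℚ) : ∑ j ∈ range (p + 1), (p.choose j : ℚ) * y ^ (p - j) * (bernoulli j).eval u =
      (bernoulli p).eval (u + y) := by
    rw [bernoulli_eval_add]
    exact sum_congr rfl fun j _ => mul_right_comm _ _ _
  simp only [mul_sub, sub_mul, sum_sub_distrib, h_add]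
  rw [add_sub_cancel, add_neg_cancel, bernoulli_eval_one, bernoulli_eval_zero,
    bernoulli_eq_bernoulli'_of_ne_one hp, sub_self]

theorem sum_range_choose_mul_sub_pow_mul_bernoulli_eval_of_le {p N : ℕ} (hp : p ≠ 1) (hN : p ≤ N)
    (u : ℚ) :
    ∑ j ∈ range N, (p.choose j : ℚ) * ((1 - u) ^ (p - j) - (-u) ^ (p - j)) *
      (bernoulli j).eval u = 0 := by
  have h_vanish : ∀ j ≥ p, (p.choose j : ℚ) * ((1 - u) ^ (p - j) - (-u) ^ (p - j)) *
      (bernoulli j).eval u = 0 := fun j hj => by simp [Nat.sub_eq_zero_of_le hj]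
  have h_full := sum_choose_mul_sub_pow_mul_bernoulli_eval hp u
  rw [sum_range_succ, h_vanish p le_rfl, add_zero] at h_full
  rw [eventually_constant_sum h_vanish hN, h_full]

theorem sum_range_succ_choose_add_two_mul_sub_pow_mul_bernoulli_eval (k : ℕ) (u : ℚ) :
    ∑ j ∈ range (k + 1), ((k + 2).choose j : ℚ) * ((1 - u) ^ (k + 2 - j) - (-u) ^ (k + 2 - j)) *
      (bernoulli j).eval u = -(k + 2) * (bernoulli (k + 1)).eval u := by
  have h_full := sum_choose_mul_sub_pow_mul_bernoulli_eval (p := k + 2) (by omega) u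
  rw [sum_range_succ, sum_range_succ, Nat.choose_succ_self_right, Nat.choose_self] at h_full
  simp only [Nat.add_sub_add_left, Nat.sub_self, pow_zero] at h_full
  push_cast at h_full
  linear_combination h_full

end Polynomial

namespace Matrix

variable {R : Type*} [CommRing R] {m : ℕ}

theorem adjugate_zero_last_of_hessenberg (M : Matrix (Fin (m + 1)) (Fin (m + 1)) R)
    (h_zero : ∀ i j : Fin (m + 1), (i : ℕ) + 1 < j → M i j = 0)
    (h_one : ∀ i : Fin m, M i.castSucc i.succ = 1) :
    M.adjugate 0 (Fin.last m) = (-1) ^ m := by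
  have h_minor : (M.submatrix Fin.castSucc Fin.succ).det = 1 := by
    rw [det_of_isLowerTriangular]
    · exact prod_eq_one fun i _ => h_one i
    · intro i j hij
      exact h_zero _ _ (by simpa using hij)
  rw [adjugate_apply, det_succ_row _ (Fin.last m), Fin.sum_univ_succ, sum_eq_zero,
    submatrix_updateRow_succAbove, Fin.succAbove_last, Fin.succAbove_zero, h_minor]
  · simp
  · intro j _
    simp

theorem det_eq_of_hessenberg_of_mulVec_eq_single (M : Matrix (Fin (m + 1)) (Fin (m + 1)) R)
    (h_zero : ∀ i j : Fin (m + 1), (i : ℕ) + 1 < j → M i j = 0)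
    (h_one : ∀ i : Fin m, M i.castSucc i.succ = 1) {v : Fin (m + 1) → R} (hv : v 0 = 1) {c : R}
    (hMv : M *ᵥ v = Pi.single (Fin.last m) c) :
    M.det = (-1) ^ m * c := by
  have h := congr_fun (mulVec_mulVec v M.adjugate M) 0
  rw [adjugate_mul, smul_mulVec, one_mulVec, hMv, mulVec_single] at h
  simpa [hv, adjugate_zero_last_of_hessenberg M h_zero h_one] using h.symm

end Matrix

section BernoulliDetMatrix

-- Row `i` is row `ℓ = i + 1` of the paper's matrix, so `ℓ + 1 = i + 2`.
def bernoulliDetMatrix (n : ℕ) (u : ℚ) : Matrix (Fin n) (Fin n) ℚ :=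
  Matrix.of fun i j : Fin n =>
    (1 / ((i : ℚ) + 2)) * (((i : ℕ) + 2).choose (j : ℕ) : ℚ) *
      ((1 - u) ^ ((i : ℕ) + 2 - (j : ℕ)) - (-u) ^ ((i : ℕ) + 2 - (j : ℕ)))

variable {n m : ℕ} (u : ℚ)

theorem bernoulliDetMatrix_apply_eq_zero {i j : Fin n} (hij : (i : ℕ) + 1 < j) :
    bernoulliDetMatrix n u i j = 0 := by
  simp [bernoulliDetMatrix, Nat.sub_eq_zero_of_le (Nat.succ_le_of_lt hij)]

theorem bernoulliDetMatrix_castSucc_succ (i : Fin m) :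
    bernoulliDetMatrix (m + 1) u i.castSucc i.succ = 1 := by
  have h_choose : ((i : ℕ) + 2).choose ((i : ℕ) + 1) = (i : ℕ) + 2 := Nat.choose_succ_self_right _
  have h_exp : (i : ℕ) + 2 - ((i : ℕ) + 1) = 1 := by omega
  simp only [bernoulliDetMatrix, of_apply, Fin.val_castSucc, Fin.val_succ, h_choose, h_exp,
    pow_one, sub_neg_eq_add, sub_add_cancel, mul_one]
  push_cast
  field_simp

theorem bernoulliDetMatrix_mulVec_bernoulli_eval :
    bernoulliDetMatrix (m + 1) u *ᵥ (fun j => (Polynomial.bernoulli j).eval u) =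
      Pi.single (Fin.last m) (-(Polynomial.bernoulli (m + 1)).eval u) := by
  ext i
  have h_row : (bernoulliDetMatrix (m + 1) u *ᵥ fun j => (Polynomial.bernoulli j).eval u) i =
      1 / ((i : ℚ) + 2) * ∑ j ∈ range (m + 1), (((i : ℕ) + 2).choose j : ℚ) *
        ((1 - u) ^ ((i : ℕ) + 2 - j) - (-u) ^ ((i : ℕ) + 2 - j)) *
          (Polynomial.bernoulli j).eval u := by
    rw [mulVec, dotProduct, mul_sum, ← Fin.sum_univ_eq_sum_range]
    exact sum_congr rfl fun j _ => by simp only [bernoulliDetMatrix, of_apply]; ring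
  rw [h_row]
  rcases (Fin.le_last i).lt_or_eq with hi | rfl
  · have hi' : (i : ℕ) < m := hi
    rw [Pi.single_eq_of_ne hi.ne,
      Polynomial.sum_range_choose_mul_sub_pow_mul_bernoulli_eval_of_le (by omega) (by omega),
      mul_zero]
  · rw [Pi.single_eq_same, Fin.val_last,
      Polynomial.sum_range_succ_choose_add_two_mul_sub_pow_mul_bernoulli_eval]
    field_simp

end BernoulliDetMatrix

theorem bernoulliPoly_det_form_QiChapman_general (n : ℕ) (u : ℚ) :
    (Polynomial.bernoulli n).eval u =
      (-1 : ℚ) ^ n * Matrix.det (Matrix.of fun i j : Fin n =>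
        (1 / ((i : ℚ) + 2)) * (((i : ℕ) + 2).choose (j : ℕ) : ℚ) *
          ((1 - u) ^ ((i : ℕ) + 2 - (j : ℕ)) - (-u) ^ ((i : ℕ) + 2 - (j : ℕ)))) := by
  cases n with
  | zero => simp
  | succ m =>
    change _ = _ * (bernoulliDetMatrix (m + 1) u).det
    rw [det_eq_of_hessenberg_of_mulVec_eq_single _
      (fun _ _ => bernoulliDetMatrix_apply_eq_zero u) (bernoulliDetMatrix_castSucc_succ u)
      (by simp) (bernoulliDetMatrix_mulVec_bernoulli_eval u)]
    have h_sq : ((-1 : ℚ) ^ m) * (-1) ^ m = 1 := by rw [← mul_pow]; norm_num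
    linear_combination (-(Polynomial.bernoulli (m + 1)).eval u) * h_sq

theorem bernoulliPoly_det_form_QiChapman (n : ℕ) (hn : 1 ≤ n) (u : ℚ) :
    (Polynomial.bernoulli n).eval u =
      (-1 : ℚ) ^ n * Matrix.det (Matrix.of fun i j : Fin n =>
        (1 / ((i : ℚ) + 2)) * (((i : ℕ) + 2).choose (j : ℕ) : ℚ) *
          ((1 - u) ^ ((i : ℕ) + 2 - (j : ℕ)) - (-u) ^ ((i : ℕ) + 2 - (j : ℕ)))) :=
  bernoulliPoly_det_form_QiChapman_general n u
end

section
/- Let z be a complex number with z ≠ 1. For every integer n ≥ 1, the Apostol–Bernoulli polynomial satisfies B_n(u,z) = n · Σ_{k=0}^{n−1} [(-1)^k k!/(z−1)^{k+1}] · Σ_{r+s=k} Σ_{ℓ+m=n−1} (-1)^{s+m} C(n−1, ℓ) z^r (1−u)^ℓ u^m S(ℓ,r) S(m,s), where S denotes Stirling numbers of the second kind. -/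
/-! With `b = ∑ B_m(u) x^m / m!`, the generating function says `(z e^x - 1) b = x e^{ux}`; by
uniqueness of power series expansions near `0` this holds for formal power series. Multiplying by
`e^{-ux}` gives `P b = x` with `P = z e^{(1-u)x} - e^{-ux} = (z - 1) + W`, where `W` has no constant
term, so modulo `x^n` the inverse of `P` is the geometric sum `∑_{k<n} (-W)^k / (z-1)^{k+1}`. The
coefficients of `W^k` come from the binomial theorem and `l! [x^l] (e^x - 1)^r = r! S(l, r)`. -/

open PowerSeries Finset Filter Topology FormalMultilinearSeries
open scoped Nat

@[simp]
theorem PowerSeries.constantCoeff_rescale {R : Type*} [CommSemiring R] (a : R) (f : R⟦X⟧) :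
    constantCoeff (rescale a f) = constantCoeff f := by
  rw [← coeff_zero_eq_constantCoeff_apply, coeff_rescale, pow_zero, one_mul,
    coeff_zero_eq_constantCoeff_apply]

theorem PowerSeries.coeff_inv_C_add {k : Type*} [Field k] {c : k} (hc : c ≠ 0) {W : k⟦X⟧}
    (hW : constantCoeff W = 0) (N : ℕ) :
    coeff N (C c + W)⁻¹ = ∑ j ∈ range (N + 1), (-1) ^ j / c ^ (j + 1) * coeff N (W ^ j) := by
  set w := C (-c⁻¹) * W
  set S := C c⁻¹ * ∑ j ∈ range (N + 1), w ^ j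
  have hP : C c + W = C c * (1 - w) := by
    rw [mul_sub, mul_one, ← mul_assoc, ← map_mul, mul_neg, mul_inv_cancel₀ hc, map_neg,
      map_one]
    ring
  have hS : S * (C c + W) = 1 - w ^ (N + 1) := by
    have hcc : C c⁻¹ * C c = 1 := by rw [← map_mul, inv_mul_cancel₀ hc, map_one]
    rw [hP, ← mul_neg_geom_sum]
    linear_combination (1 - w) * (∑ j ∈ range (N + 1), w ^ j) * hcc
  have hPinv : (C c + W)⁻¹ = S + (C c + W)⁻¹ * w ^ (N + 1) := by
    have hunit : (C c + W)⁻¹ * (C c + W) = 1 :=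
      PowerSeries.inv_mul_cancel _ (by simp [hW, hc])
    linear_combination S * hunit - (C c + W)⁻¹ * hS
  have hrem : coeff N ((C c + W)⁻¹ * w ^ (N + 1)) = 0 := by
    have hw : X ∣ w := X_dvd_iff.mpr (by simp [w, hW])
    exact X_pow_dvd_iff.mp ((pow_dvd_pow_of_dvd hw _).mul_left _) N (lt_add_one N)
  rw [hPinv, map_add, hrem, add_zero, coeff_C_mul, map_sum, mul_sum]
  refine sum_congr rfl fun j _ => ?_
  rw [mul_pow, ← map_pow, coeff_C_mul]
  ring

section ExpSubOne

variable {K : Type*} [Field K] [CharZero K]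

theorem PowerSeries.derivative_exp_sub_one_pow_succ (s : ℕ) :
    d⁄dX K ((exp K - 1) ^ (s + 1)) = (s + 1) • ((exp K - 1) ^ (s + 1) + (exp K - 1) ^ s) := by
  rw [Derivation.leibniz_pow, map_sub, derivative_exp, Derivation.map_one_eq_zero, sub_zero,
    add_tsub_cancel_right, smul_eq_mul, ← sub_add_cancel (exp K) 1]
  ring

theorem PowerSeries.factorial_mul_coeff_exp_sub_one_pow (l r : ℕ) :
    (l ! : K) * coeff l ((exp K - 1) ^ r) = r ! * stirling l r := by
  induction l generalizing r with
  | zero =>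
    cases r <;> simp [stirling, constantCoeff_exp]
  | succ l ih =>
    cases r with
    | zero => simp [stirling, coeff_one]
    | succ s =>
      have hderiv := congrArg (coeff l) (derivative_exp_sub_one_pow_succ (K := K) s)
      rw [coeff_derivative, map_nsmul, map_add, nsmul_eq_mul] at hderiv
      have ih₁ := ih (s + 1)
      have ih₀ := ih s
      rw [stirling, Nat.factorial_succ, Nat.factorial_succ]
      rw [Nat.factorial_succ] at ih₁
      push_cast at ih₀ ih₁ hderiv ⊢
      linear_combination (l ! : K) * hderiv + (s + 1) * ih₁ + (s + 1) * ih₀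

theorem PowerSeries.factorial_mul_coeff_pow (z u : K) (N k : ℕ) :
    (N ! : K) * coeff N ((C z * rescale (1 - u) (exp K - 1) - rescale (-u) (exp K - 1)) ^ k) =
      k ! * ∑ rs ∈ antidiagonal k, ∑ lm ∈ antidiagonal N,
        (-1) ^ (rs.2 + lm.2) * (N.choose lm.1 : K) * z ^ rs.1 * (1 - u) ^ lm.1 * u ^ lm.2 *
          (stirling lm.1 rs.1 : K) * (stirling lm.2 rs.2 : K) := by
  rw [sub_eq_add_neg, (Commute.all _ _).add_pow', map_sum, mul_sum, mul_sum]
  refine sum_congr rfl fun ⟨r, s⟩ hrs => ?_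
  rw [HasAntidiagonal.mem_antidiagonal] at hrs
  subst hrs
  rw [map_nsmul, nsmul_eq_mul, coeff_mul, mul_sum, mul_sum, mul_sum]
  refine sum_congr rfl fun ⟨l, m⟩ hlm => ?_
  rw [HasAntidiagonal.mem_antidiagonal] at hlm
  subst hlm
  have hneg : (-rescale (-u) (exp K - 1)) ^ s = C ((-1) ^ s) * rescale (-u) ((exp K - 1) ^ s) := by
    rw [neg_pow, map_pow, map_pow, map_neg, map_one]
  rw [mul_pow, ← map_pow, ← map_pow, hneg, coeff_C_mul, coeff_C_mul, coeff_rescale,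
    coeff_rescale]
  have hl := factorial_mul_coeff_exp_sub_one_pow (K := K) l r
  have hm := factorial_mul_coeff_exp_sub_one_pow (K := K) m s
  have hlm : ((l + m).choose l * l ! * m ! : K) = (l + m)! := by
    rw [Nat.choose_symm_add]
    exact_mod_cast Nat.add_choose_mul_factorial_mul_factorial l m
  have hrs : ((r + s).choose r * r ! * s ! : K) = (r + s)! := by
    rw [Nat.choose_symm_add]
    exact_mod_cast Nat.add_choose_mul_factorial_mul_factorial r s
  rw [← hlm, ← hrs, neg_pow u, pow_add]
  linear_combination
    ((l + m).choose l * (r + s).choose r * z ^ r * (1 - u) ^ l * (-1) ^ s * (-1) ^ m * u ^ m : K) *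
      ((m ! * coeff m ((exp K - 1) ^ s)) * hl + r ! * stirling l r * hm)

theorem PowerSeries.coeff_succ_eq_coeff_inv {z u : K} (hz : z ≠ 1) {b : K⟦X⟧}
    (h : (C z * exp K - 1) * b = X * rescale u (exp K)) (N : ℕ) :
    coeff (N + 1) b = coeff N
      (C (z - 1) + (C z * rescale (1 - u) (exp K - 1) - rescale (-u) (exp K - 1)))⁻¹ := by
  set P := C (z - 1) + (C z * rescale (1 - u) (exp K - 1) - rescale (-u) (exp K - 1))
  have hP : P = rescale (-u) (exp K) * (C z * rescale 1 (exp K) - 1) := by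
    simp only [P, mul_sub, mul_one, mul_left_comm _ (C z), exp_mul_exp_eq_exp_add, map_sub,
      map_one, neg_add_eq_sub]
    ring
  have hPb : P * b = X := by
    rw [hP, rescale_one, RingHom.id_apply, mul_assoc, h, mul_left_comm, exp_mul_exp_eq_exp_add,
      neg_add_cancel, rescale_zero_apply, constantCoeff_exp, map_one, mul_one]
  have hPunit : constantCoeff P ≠ 0 := by
    simpa [P, constantCoeff_exp, sub_eq_zero] using hz
  have hb : b = P⁻¹ * X := by
    rw [← hPb, ← mul_assoc, PowerSeries.inv_mul_cancel _ hPunit, one_mul]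
  rw [hb, coeff_succ_mul_X]

end ExpSubOne

section Analytic

variable {𝕜 : Type*} [NontriviallyNormedField 𝕜] {a : ℕ → 𝕜} {f : 𝕜 → 𝕜}

theorem hasFPowerSeriesAt_ofScalars_of_eventually_hasSum
    (h : ∀ᶠ x in 𝓝 0, HasSum (fun m => a m * x ^ m) (f x)) :
    HasFPowerSeriesAt f (ofScalars 𝕜 a) 0 := by
  obtain ⟨ε, hε, hball⟩ := Metric.eventually_nhds_iff.mp h
  obtain ⟨x₀, hx₀, hx₀ε⟩ := NormedField.exists_norm_lt 𝕜 hε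
  have hx₀ball : dist x₀ 0 < ε := by rwa [dist_zero_right]
  have hradius : (‖x₀‖₊ : ENNReal) ≤ (ofScalars 𝕜 a).radius := by
    refine (ofScalars 𝕜 a).le_radius_of_tendsto (l := 0) ?_
    simpa [ofScalars_norm, norm_mul, norm_pow] using
      (hball hx₀ball).summable.tendsto_atTop_zero.norm
  refine ⟨‖x₀‖₊, hradius, by simpa using hx₀, fun {y} hy => ?_⟩
  have hy : dist y 0 < ε := by
    rw [Metric.mem_eball, edist_zero_right, enorm_eq_nnnorm, ENNReal.coe_lt_coe,
      ← NNReal.coe_lt_coe, coe_nnnorm, coe_nnnorm] at hy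
    rw [dist_zero_right]
    exact hy.trans hx₀ε
  simpa [ofScalars_apply_eq, mul_comm] using hball hy

theorem eventually_summable_norm_of_eventually_hasSum
    (h : ∀ᶠ x in 𝓝 0, HasSum (fun m => a m * x ^ m) (f x)) :
    ∀ᶠ x in 𝓝 0, Summable fun m => ‖a m * x ^ m‖ := by
  obtain ⟨r, hr⟩ := hasFPowerSeriesAt_ofScalars_of_eventually_hasSum h
  filter_upwards [Metric.eball_mem_nhds 0 hr.r_pos] with x hx
  simpa [ofScalars_apply_eq, mul_comm] using
    (ofScalars 𝕜 a).summable_norm_apply (Metric.eball_subset_eball hr.r_le hx)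

theorem PowerSeries.eq_of_eventually_hasSum {p q : 𝕜⟦X⟧}
    (hp : ∀ᶠ x in 𝓝 0, HasSum (fun m => coeff m p * x ^ m) (f x))
    (hq : ∀ᶠ x in 𝓝 0, HasSum (fun m => coeff m q * x ^ m) (f x)) : p = q := by
  ext m
  exact congrFun (ofScalars_series_injective (𝕜 := 𝕜) (E := 𝕜)
    ((hasFPowerSeriesAt_ofScalars_of_eventually_hasSum hp).eq_formalMultilinearSeries
      (hasFPowerSeriesAt_ofScalars_of_eventually_hasSum hq))) m

end Analytic

theorem PowerSeries.hasSum_coeff_mul {R : Type*} [NormedCommRing R] {p q : R⟦X⟧} {x s t : R}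
    (hp : HasSum (fun m => coeff m p * x ^ m) s) (hq : HasSum (fun m => coeff m q * x ^ m) t)
    (hp' : Summable fun m => ‖coeff m p * x ^ m‖)
    (hq' : Summable fun m => ‖coeff m q * x ^ m‖) :
    HasSum (fun m => coeff m (p * q) * x ^ m) (s * t) := by
  have hterm : ∀ m, coeff m (p * q) * x ^ m =
      ∑ kl ∈ antidiagonal m, (coeff kl.1 p * x ^ kl.1) * (coeff kl.2 q * x ^ kl.2) := by
    intro m
    rw [coeff_mul, sum_mul]
    refine sum_congr rfl fun kl hkl => ?_
    rw [← mem_antidiagonal.mp hkl, pow_add]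
    ring
  simp_rw [hterm]
  rw [← hp.tsum_eq, ← hq.tsum_eq, tsum_mul_tsum_eq_tsum_sum_antidiagonal_of_summable_norm' hp'
    hp.summable hq' hq.summable]
  exact (summable_sum_mul_antidiagonal_of_summable_norm' hp' hp.summable hq' hq.summable).hasSum

theorem PowerSeries.hasSum_coeff_X_mul {R : Type*} [CommRing R] [TopologicalSpace R]
    [IsTopologicalRing R] {p : R⟦X⟧} {x s : R} (hp : HasSum (fun m => coeff m p * x ^ m) s) :
    HasSum (fun m => coeff m (X * p) * x ^ m) (x * s) := by
  have hshift (m : ℕ) : coeff (m + 1) (X * p) * x ^ (m + 1) = x * (coeff m p * x ^ m) := by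
    rw [coeff_succ_X_mul]
    ring
  refine (hasSum_nat_add_iff' 1).mp ?_
  simp only [hshift, sum_range_one, coeff_zero_X_mul, zero_mul, sub_zero]
  exact hp.mul_left x

theorem PowerSeries.coeff_rescale_exp_mul_pow (a x : ℂ) (m : ℕ) :
    coeff m (rescale a (exp ℂ)) * x ^ m = (a * x) ^ m / m.factorial := by
  simp only [coeff_rescale, coeff_exp, one_div, map_inv₀, map_natCast, mul_pow]
  ring

theorem PowerSeries.hasSum_coeff_rescale_exp (a x : ℂ) :
    HasSum (fun m => coeff m (rescale a (exp ℂ)) * x ^ m) (Complex.exp (a * x)) := by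
  simp_rw [coeff_rescale_exp_mul_pow, Complex.exp_eq_exp_ℂ]
  exact NormedSpace.expSeries_div_hasSum_exp (a * x)

theorem PowerSeries.summable_norm_coeff_rescale_exp (a x : ℂ) :
    Summable fun m => ‖coeff m (rescale a (exp ℂ)) * x ^ m‖ := by
  simpa only [coeff_rescale_exp_mul_pow, norm_div, norm_pow, Complex.norm_natCast] using
    Real.summable_pow_div_factorial ‖a * x‖

theorem PowerSeries.C_mul_exp_sub_one_mul_eq_of_eventually_hasSum {z u : ℂ} (hz : z ≠ 1)
    {b : ℂ⟦X⟧} (hb : ∀ᶠ x in 𝓝 0, HasSum (fun m => coeff m b * x ^ m)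
      (x * Complex.exp (u * x) / (z * Complex.exp x - 1))) :
    (C z * exp ℂ - 1) * b = X * rescale u (exp ℂ) := by
  suffices C z * rescale 1 (exp ℂ) * b = b + X * rescale u (exp ℂ) by
    rw [rescale_one] at this
    linear_combination this
  have hden : ∀ᶠ x in 𝓝 0, z * Complex.exp x - 1 ≠ 0 :=
    (by fun_prop : Continuous fun x => z * Complex.exp x - 1).continuousAt.eventually_ne
      (by simpa [sub_eq_zero] using hz)
  refine eq_of_eventually_hasSum (f := fun x => z * Complex.exp x *
    (x * Complex.exp (u * x) / (z * Complex.exp x - 1))) ?_ ?_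
  · filter_upwards [hb, eventually_summable_norm_of_eventually_hasSum hb] with x hx hx'
    refine hasSum_coeff_mul ?_ hx ?_ hx'
    · simpa [coeff_C_mul, mul_assoc] using (hasSum_coeff_rescale_exp 1 x).mul_left z
    · simpa [coeff_C_mul, mul_assoc] using (summable_norm_coeff_rescale_exp 1 x).mul_left ‖z‖
  · filter_upwards [hb, hden] with x hx hx0
    have hval : z * Complex.exp x * (x * Complex.exp (u * x) / (z * Complex.exp x - 1)) =
        x * Complex.exp (u * x) / (z * Complex.exp x - 1) + x * Complex.exp (u * x) := by
      field_simp
      ring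
    rw [hval]
    simpa only [map_add, add_mul] using hx.add (hasSum_coeff_X_mul (hasSum_coeff_rescale_exp u x))

theorem apostolBernoulli_closed_form (z : ℂ) (hz : z ≠ 1) (B : ℕ → ℂ → ℂ)
    (hB : ∀ u : ℂ, ∀ᶠ x : ℂ in nhds 0,
      HasSum (fun m : ℕ => B m u * x ^ m / (m.factorial : ℂ))
        (x * Complex.exp (u * x) / (z * Complex.exp x - 1)))
    (n : ℕ) (hn : 1 ≤ n) (u : ℂ) :
    B n u = (n : ℂ) * ∑ k ∈ Finset.range n,
      ((-1 : ℂ) ^ k * (k.factorial : ℂ) / (z - 1) ^ (k + 1)) *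
        ∑ rs ∈ Finset.HasAntidiagonal.antidiagonal k, ∑ lm ∈ Finset.HasAntidiagonal.antidiagonal (n - 1),
          (-1 : ℂ) ^ (rs.2 + lm.2) * ((n - 1).choose lm.1 : ℂ) *
            z ^ rs.1 * (1 - u) ^ lm.1 * u ^ lm.2 *
            (stirling lm.1 rs.1 : ℂ) * (stirling lm.2 rs.2 : ℂ) := by
  obtain ⟨N, rfl⟩ := exists_add_of_le hn
  rw [add_comm, add_tsub_cancel_right]
  set b : ℂ⟦X⟧ := mk fun m => B m u / (m ! : ℂ)
  have hb : ∀ᶠ x in 𝓝 0, HasSum (fun m => coeff m b * x ^ m)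
      (x * Complex.exp (u * x) / (z * Complex.exp x - 1)) := by
    simpa only [b, coeff_mk, div_mul_eq_mul_div] using hB u
  have hBb : B (N + 1) u = (N + 1) ! * coeff (N + 1) b := by
    rw [coeff_mk, mul_div_cancel₀ _ (Nat.cast_ne_zero.mpr (Nat.factorial_ne_zero _))]
  have hz1 : z - 1 ≠ 0 := sub_ne_zero.mpr hz
  rw [hBb, coeff_succ_eq_coeff_inv hz (C_mul_exp_sub_one_mul_eq_of_eventually_hasSum hz hb),
    coeff_inv_C_add hz1 (by simp [constantCoeff_exp]), Nat.factorial_succ, Nat.cast_mul, mul_assoc,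
    mul_sum]
  push_cast
  refine congrArg _ (sum_congr rfl fun k _ => ?_)
  rw [mul_left_comm, factorial_mul_coeff_pow]
  ring
end

section
/- Let z be a complex number with z ≠ 1. For every integer n ≥ 1, the Apostol–Bernoulli number satisfies B_{n+1}(z) = ((-1)^n (n+1)/(z−1)^{n+1}) times the determinant of the n×n matrix with (ℓ,m)-entry C(ℓ,m)(z − δ_{ℓm}) for 1 ≤ ℓ ≤ n and 0 ≤ m ≤ n−1, where δ_{ℓm} is the Kronecker delta. -/
/-!
Multiplying the generating function `x / (z eˣ - 1) = ∑ bₘ xᵐ / m!` by `z eˣ - 1` and comparing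
coefficients gives `∑ₖ C(m, k) (z - δₖₘ) bₖ = δₘ₁`. Hence `b₀ = 0`, and `b₁, …, bₙ₊₁` solve a
lower triangular system with diagonal `z - 1`. Cramer's rule writes `(z - 1)ⁿ⁺¹ bₙ₊₁` as a
determinant; its Laplace expansion along the replaced column leaves `(-1)ⁿ` times a minor which,
since `(j + 1) C(i + 2, j + 1) = (i + 2) C(i + 1, j)`, is `(n + 1)! / n! = n + 1` times the
determinant of the statement.
-/

open Finset FormalMultilinearSeries Filter Topology Nat Matrix

section PowerSeries

variable {𝕜 : Type*} [NontriviallyNormedField 𝕜] {f g : 𝕜 → 𝕜} {a c : ℕ → 𝕜}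

theorem hasFPowerSeriesAt_ofScalars_iff :
    HasFPowerSeriesAt f (ofScalars 𝕜 a) 0 ↔
      ∀ᶠ x in 𝓝 0, HasSum (fun n => a n * x ^ n) (f x) := by
  simp [hasFPowerSeriesAt_iff, coeff_ofScalars, mul_comm]

theorem HasFPowerSeriesAt.ofScalars_mul [CompleteSpace 𝕜]
    (hf : HasFPowerSeriesAt f (ofScalars 𝕜 a) 0) (hg : HasFPowerSeriesAt g (ofScalars 𝕜 c) 0) :
    HasFPowerSeriesAt (f * g)
      (ofScalars 𝕜 fun n => ∑ k ∈ range (n + 1), a k * c (n - k)) 0 := by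
  obtain ⟨r, hr⟩ := hf
  obtain ⟨s, hs⟩ := hg
  have summable_norm : ∀ {p : ℕ → 𝕜} {ρ : ENNReal} {x : 𝕜}, ρ ≤ (ofScalars 𝕜 p).radius →
      x ∈ Metric.eball 0 ρ → Summable fun n => ‖p n * x ^ n‖ := by
    intro p ρ x hρ hx
    have := (ofScalars 𝕜 p).summable_norm_apply (Metric.eball_subset_eball hρ hx)
    simp only [ofScalars_apply_eq, smul_eq_mul] at this
    simpa only [mul_comm] using this
  rw [hasFPowerSeriesAt_ofScalars_iff]
  filter_upwards [Metric.eball_mem_nhds 0 (lt_min hr.r_pos hs.r_pos)] with x hx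
  have hxr : x ∈ Metric.eball 0 r := Metric.eball_subset_eball (min_le_left _ _) hx
  have hxs : x ∈ Metric.eball 0 s := Metric.eball_subset_eball (min_le_right _ _) hx
  have hfx : HasSum (fun n => a n * x ^ n) (f x) := by
    simpa [ofScalars_apply_eq, mul_comm] using hr.hasSum hxr
  have hgx : HasSum (fun n => c n * x ^ n) (g x) := by
    simpa [ofScalars_apply_eq, mul_comm] using hs.hasSum hxs
  have hcauchy := hasSum_sum_range_mul_of_summable_norm
    (summable_norm hr.r_le hxr) (summable_norm hs.r_le hxs)
  rw [hfx.tsum_eq, hgx.tsum_eq] at hcauchy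
  rw [Pi.mul_apply]
  convert hcauchy using 2 with n
  rw [sum_mul]
  refine sum_congr rfl fun k hk => ?_
  rw [← pow_mul_pow_sub x (mem_range_succ_iff.mp hk)]
  ring

theorem hasFPowerSeriesAt_id_ofScalars :
    HasFPowerSeriesAt (fun x : 𝕜 => x) (ofScalars 𝕜 fun n => if n = 1 then (1 : 𝕜) else 0) 0 := by
  refine hasFPowerSeriesAt_ofScalars_iff.2 <| .of_forall fun x => ?_
  have h : HasSum (fun n => if n = 1 then x else 0) x := hasSum_ite_eq 1 x
  convert h using 2 with n
  split_ifs <;> simp_all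

end PowerSeries

theorem hasFPowerSeriesAt_mul_exp_sub_one (z : ℂ) :
    HasFPowerSeriesAt (fun x => z * Complex.exp x - 1)
      (ofScalars ℂ fun k => z / (k ! : ℂ) - if k = 0 then 1 else 0) 0 := by
  refine hasFPowerSeriesAt_ofScalars_iff.2 <| .of_forall fun x => ?_
  have hexp : HasSum (fun k => x ^ k / k !) (Complex.exp x) := by
    simpa [Complex.exp_eq_exp_ℂ, div_eq_inv_mul] using
      NormedSpace.exp_series_hasSum_exp' (𝕂 := ℂ) x
  have h : HasSum (fun k => z * (x ^ k / k !) - if k = 0 then 1 else 0)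
      (z * Complex.exp x - 1) :=
    (hexp.mul_left z).sub (hasSum_ite_eq 0 (1 : ℂ))
  refine h.congr_fun fun k => ?_
  split_ifs with hk
  · simp [hk]
  · ring

section Recurrence

variable {z : ℂ} {b : ℕ → ℂ}

theorem apostolBernoulli_coeff_mul_exp_sub_one (hz : z ≠ 1)
    (hb : ∀ᶠ x in 𝓝 0, HasSum (fun m => b m * x ^ m / m !) (x / (z * Complex.exp x - 1)))
    (m : ℕ) :
    ∑ k ∈ range (m + 1), b k / k ! * (z / (m - k)! - if m - k = 0 then 1 else 0) =
      if m = 1 then 1 else 0 := by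
  have hf : HasFPowerSeriesAt (fun x => x / (z * Complex.exp x - 1))
      (ofScalars ℂ fun m => b m / m !) 0 :=
    hasFPowerSeriesAt_ofScalars_iff.2 <| hb.mono fun x hx => by
      simpa only [div_mul_eq_mul_div] using hx
  have hdenom : ∀ᶠ x in 𝓝 (0 : ℂ), z * Complex.exp x - 1 ≠ 0 := by
    refine (Continuous.continuousAt (by fun_prop)).eventually_ne ?_
    simpa [sub_eq_zero] using hz
  have hprod := hf.ofScalars_mul (hasFPowerSeriesAt_mul_exp_sub_one z)
  have hcoeff := hprod.eq_formalMultilinearSeries_of_eventually hasFPowerSeriesAt_id_ofScalars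
    (hdenom.mono fun x hx => div_mul_cancel₀ x hx)
  exact congrFun ((ofScalars_series_eq_iff ℂ _ _).1 hcoeff) m

theorem apostolBernoulli_recurrence (hz : z ≠ 1)
    (hb : ∀ᶠ x in 𝓝 0, HasSum (fun m => b m * x ^ m / m !) (x / (z * Complex.exp x - 1)))
    (m : ℕ) :
    ∑ k ∈ range (m + 1), (m.choose k : ℂ) * (z - if k = m then 1 else 0) * b k =
      if m = 1 then 1 else 0 := by
  have hterm : ∀ k ∈ range (m + 1), (m.choose k : ℂ) * (z - if k = m then 1 else 0) * b k =
      m ! * (b k / k ! * (z / (m - k)! - if m - k = 0 then 1 else 0)) := by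
    intro k hk
    have hkm := mem_range_succ_iff.mp hk
    rw [Nat.cast_choose ℂ hkm]
    rcases hkm.lt_or_eq with hlt | rfl
    · rw [if_neg hlt.ne, if_neg (Nat.sub_ne_zero_of_lt hlt), sub_zero, sub_zero]
      field_simp
    · simp only [if_pos, Nat.sub_self, factorial_zero, cast_one, mul_one, div_one]
      field_simp
  rw [sum_congr rfl hterm, ← mul_sum, apostolBernoulli_coeff_mul_exp_sub_one hz hb]
  split_ifs with hm <;> simp [hm]

end Recurrence

theorem Matrix.cramer_mulVec {n R : Type*} [Fintype n] [DecidableEq n] [CommRing R]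
    (A : Matrix n n R) (u : n → R) : A.cramer (A *ᵥ u) = A.det • u := by
  rw [cramer_eq_adjugate_mulVec, mulVec_mulVec, adjugate_mul, smul_mulVec, one_mulVec]

theorem Matrix.det_updateCol_last_single_zero {R : Type*} [CommRing R] {n : ℕ}
    (A : Matrix (Fin (n + 1)) (Fin (n + 1)) R) :
    (A.updateCol (Fin.last n) (Pi.single 0 1)).det =
      (-1) ^ n * (A.submatrix Fin.succ Fin.castSucc).det := by
  rw [det_succ_column _ (Fin.last n), sum_eq_single 0]
  · rw [updateCol_self, Pi.single_eq_same, ← Fin.succAbove_last, submatrix_updateCol_succAbove]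
    simp
  · intro i _ hi
    simp [Pi.single_eq_of_ne hi]
  · simp

section LinearSystem

variable {R : Type*} [CommRing R] (z : R)

/-- Row `i` is the recurrence at `m = i + 1`, in the unknowns `b (j + 1)` (recall `b 0 = 0`). -/
def apostolBernoulliSystem (n : ℕ) : Matrix (Fin (n + 1)) (Fin (n + 1)) R :=
  of fun i j => (((i : ℕ) + 1).choose ((j : ℕ) + 1) : R) * (z - if (i : ℕ) = j then 1 else 0)

def apostolBernoulliDetMatrix (n : ℕ) : Matrix (Fin n) (Fin n) R :=
  of fun i j => (((i : ℕ) + 1).choose (j : ℕ) : R) *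
    (z - if ((i : ℕ) + 1) = (j : ℕ) then 1 else 0)

theorem det_apostolBernoulliSystem (n : ℕ) :
    (apostolBernoulliSystem z n).det = (z - 1) ^ (n + 1) := by
  rw [det_of_isLowerTriangular]
  · simp [apostolBernoulliSystem]
  · intro i j hij
    have : (i : ℕ) + 1 < j + 1 := by simpa using hij
    simp [apostolBernoulliSystem, Nat.choose_eq_zero_of_lt this]

theorem apostolBernoulliSystem_mulVec {b : ℕ → R} (hb0 : b 0 = 0)
    (hrec : ∀ m, ∑ k ∈ range (m + 1), (m.choose k : R) * (z - if k = m then 1 else 0) * b k =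
      if m = 1 then 1 else 0) (n : ℕ) :
    apostolBernoulliSystem z n *ᵥ (fun j => b (j + 1)) = Pi.single 0 1 := by
  ext i
  have hi : (i : ℕ) < n + 1 := i.is_lt
  let g : ℕ → R := fun k => (((i : ℕ) + 1).choose (k + 1) : R) *
    (z - if (i : ℕ) = k then 1 else 0) * b (k + 1)
  calc (apostolBernoulliSystem z n *ᵥ fun j => b (j + 1)) i
      = ∑ k ∈ range (n + 1), g k := by
        rw [← Fin.sum_univ_eq_sum_range g]
        simp [g, mulVec, dotProduct, apostolBernoulliSystem, mul_assoc]
    _ = ∑ k ∈ range ((i : ℕ) + 1), g k := by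
        refine (sum_subset (range_subset_range.2 hi) fun k _ hk => ?_).symm
        have : (i : ℕ) + 1 < k + 1 := by simpa using hk
        simp [g, Nat.choose_eq_zero_of_lt this]
    _ = ∑ k ∈ range ((i : ℕ) + 1 + 1), (((i : ℕ) + 1).choose k : R) *
          (z - if k = (i : ℕ) + 1 then 1 else 0) * b k := by
        rw [sum_range_succ' _ ((i : ℕ) + 1)]
        simp [g, hb0, eq_comm]
    _ = (Pi.single 0 1 : Fin (n + 1) → R) i := by
        rw [hrec, Pi.single_apply]
        exact if_congr (by rw [Fin.ext_iff, Fin.val_zero]; omega) rfl rfl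

theorem det_apostolBernoulliSystem_submatrix [IsDomain R] [CharZero R] (n : ℕ) :
    ((apostolBernoulliSystem z n).submatrix Fin.succ Fin.castSucc).det =
      (n + 1) * (apostolBernoulliDetMatrix z n).det := by
  have hentries : (of fun i j : Fin n =>
      (((j : ℕ) : R) + 1) * (apostolBernoulliSystem z n).submatrix Fin.succ Fin.castSucc i j) =
      of fun i j : Fin n => (((i : ℕ) : R) + 2) * apostolBernoulliDetMatrix z n i j := by
    ext i j
    have hchoose : (((i : ℕ) : R) + 2) * (((i : ℕ) + 1).choose j : R) =
        (((j : ℕ) : R) + 1) * (((i : ℕ) + 1 + 1).choose ((j : ℕ) + 1) : R) := by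
      have := congrArg (Nat.cast : ℕ → R) (Nat.add_one_mul_choose_eq ((i : ℕ) + 1) j)
      push_cast at this
      linear_combination this
    simp only [apostolBernoulliSystem, apostolBernoulliDetMatrix, of_apply, submatrix_apply,
      Fin.val_succ, Fin.val_castSucc]
    linear_combination (-(z - if (i : ℕ) + 1 = j then 1 else 0)) * hchoose
  have hrow : ∏ j : Fin n, (((j : ℕ) : R) + 1) = n ! := by
    rw [Fin.prod_univ_eq_prod_range (fun k => (k : R) + 1), ← prod_range_add_one_eq_factorial]
    push_cast
    rfl
  have hcol : ∏ i : Fin n, (((i : ℕ) : R) + 2) = (n + 1) * n ! := by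
    rw [Fin.prod_univ_eq_prod_range (fun k => (k : R) + 2), ← Nat.cast_add_one, ← Nat.cast_mul,
      ← factorial_succ, ← prod_range_add_one_eq_factorial, prod_range_succ']
    push_cast
    ring_nf
  have hdet := congrArg det hentries
  rw [det_mul_row, det_mul_column, hrow, hcol, mul_assoc, mul_left_comm] at hdet
  exact mul_left_cancel₀ (by exact_mod_cast n.factorial_ne_zero) hdet

end LinearSystem

theorem apostolBernoulli_number_det_form_general (z : ℂ) (hz : z ≠ 1) (B : ℕ → ℂ → ℂ)
    (hB : ∀ u : ℂ, ∀ᶠ x : ℂ in nhds 0,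
      HasSum (fun m : ℕ => B m u * x ^ m / (m.factorial : ℂ))
        (x * Complex.exp (u * x) / (z * Complex.exp x - 1)))
    (n : ℕ) :
    B (n + 1) 0 = ((-1 : ℂ) ^ n * ((n : ℂ) + 1) / (z - 1) ^ (n + 1)) *
      Matrix.det (Matrix.of fun i j : Fin n =>
        (((i : ℕ) + 1).choose (j : ℕ) : ℂ) *
          (z - if ((i : ℕ) + 1) = (j : ℕ) then 1 else 0)) := by
  have hrec := apostolBernoulli_recurrence hz (b := fun m => B m 0) (by simpa using hB 0)
  have hb0 : B 0 0 = 0 := by simpa [sub_eq_zero, hz] using hrec 0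
  have hcramer := congrFun
    (cramer_mulVec (apostolBernoulliSystem z n) fun j => B (j + 1) 0) (Fin.last n)
  rw [apostolBernoulliSystem_mulVec z hb0 hrec, cramer_apply, det_updateCol_last_single_zero,
    det_apostolBernoulliSystem_submatrix, det_apostolBernoulliSystem] at hcramer
  have hz1 : (z - 1) ^ (n + 1) ≠ 0 := pow_ne_zero _ (sub_ne_zero.2 hz)
  simp only [Pi.smul_apply, smul_eq_mul, Fin.val_last, apostolBernoulliDetMatrix] at hcramer
  rw [div_mul_eq_mul_div, eq_div_iff hz1]
  linear_combination -hcramer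

theorem apostolBernoulli_number_det_form (z : ℂ) (hz : z ≠ 1) (B : ℕ → ℂ → ℂ)
    (hB : ∀ u : ℂ, ∀ᶠ x : ℂ in nhds 0,
      HasSum (fun m : ℕ => B m u * x ^ m / (m.factorial : ℂ))
        (x * Complex.exp (u * x) / (z * Complex.exp x - 1)))
    (n : ℕ) (hn : 1 ≤ n) :
    B (n + 1) 0 = ((-1 : ℂ) ^ n * ((n : ℂ) + 1) / (z - 1) ^ (n + 1)) *
      Matrix.det (Matrix.of fun i j : Fin n =>
        (((i : ℕ) + 1).choose (j : ℕ) : ℂ) *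
          (z - if ((i : ℕ) + 1) = (j : ℕ) then 1 else 0)) :=
  apostolBernoulli_number_det_form_general z hz B hB n
end

section
/- Let μ and ν be n-times differentiable functions on an interval with ν(x) ≠ 0. Then the n-th derivative of μ/ν at x equals ((-1)^n/ν(x)^{n+1}) times the determinant of the (n+1)×(n+1) matrix whose first column is (μ(x), μ'(x), …, μ^{(n)}(x))^T and whose (ℓ, m)-entry in the remaining columns (0 ≤ ℓ ≤ n, 0 ≤ m ≤ n−1) is C(ℓ, m) ν^{(ℓ−m)}(x), with the convention that these entries vanish for ℓ < m. -/
/-!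
Leibniz' rule applied to `μ = (μ / ν) * ν` says that the vector of derivatives
`((μ / ν)^{(j)}(x))ⱼ` solves a lower triangular linear system with matrix
`(C(ℓ, m) ν^{(ℓ - m)}(x))_{ℓ m}` and right-hand side `(μ^{(ℓ)}(x))_ℓ`. The matrix has determinant
`ν(x)^{n+1}`, so Cramer's rule gives `(μ / ν)^{(n)}(x)` as a quotient of determinants; moving the
right-hand side from the last column to the first costs the sign `(-1)^n`.
-/

open Finset Matrix

namespace Matrix

variable {ι R : Type*} [Fintype ι] [DecidableEq ι] [CommRing R]

theorem det_updateCol_mulVec (A : Matrix ι ι R) (v : ι → R) (k : ι) :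
    (A.updateCol k (A *ᵥ v)).det = A.det * v k := by
  rw [← cramer_apply, cramer_eq_adjugate_mulVec, mulVec_mulVec, adjugate_mul, smul_mulVec,
    one_mulVec, Pi.smul_apply, smul_eq_mul]

theorem det_submatrix_finRotate_symm {n : ℕ} (A : Matrix (Fin (n + 1)) (Fin (n + 1)) R) :
    (A.submatrix id (finRotate (n + 1)).symm).det = (-1) ^ n * A.det := by
  rw [det_permute', Equiv.Perm.sign_symm, sign_finRotate]
  push_cast
  rfl

end Matrix

section LeibnizMatrix

variable {𝕜 : Type*} [NontriviallyNormedField 𝕜]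

/-- By Leibniz' rule, the matrix of multiplication by `g` on `n`-jets at `x`. -/
noncomputable def leibnizMatrix (n : ℕ) (g : 𝕜 → 𝕜) (x : 𝕜) : Matrix (Fin (n + 1)) (Fin (n + 1)) 𝕜 :=
  of fun i j => ((i : ℕ).choose j : 𝕜) * iteratedDeriv (i - j) g x

theorem leibnizMatrix_isLowerTriangular (n : ℕ) (g : 𝕜 → 𝕜) (x : 𝕜) :
    (leibnizMatrix n g x).IsLowerTriangular := fun i j hij => by
  simp [leibnizMatrix, Nat.choose_eq_zero_of_lt (show (i : ℕ) < j from hij)]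

theorem det_leibnizMatrix (n : ℕ) (g : 𝕜 → 𝕜) (x : 𝕜) :
    (leibnizMatrix n g x).det = g x ^ (n + 1) := by
  rw [det_of_isLowerTriangular _ (leibnizMatrix_isLowerTriangular n g x)]
  simp [leibnizMatrix]

theorem leibnizMatrix_mulVec {n : ℕ} {f g : 𝕜 → 𝕜} {x : 𝕜}
    (hf : ContDiffAt 𝕜 n f x) (hg : ContDiffAt 𝕜 n g x) :
    leibnizMatrix n g x *ᵥ (fun j : Fin (n + 1) => iteratedDeriv j f x) =
      fun i : Fin (n + 1) => iteratedDeriv i (f * g) x := by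
  ext i
  have hi : ((i : ℕ) : WithTop ℕ∞) ≤ n := by exact_mod_cast Nat.lt_succ_iff.mp i.isLt
  simp only [mulVec, dotProduct, leibnizMatrix, of_apply]
  rw [iteratedDeriv_mul (hf.of_le hi) (hg.of_le hi),
    Fin.sum_univ_eq_sum_range fun j => ((i : ℕ).choose j : 𝕜) * iteratedDeriv (i - j) g x *
      iteratedDeriv j f x]
  symm
  refine (sum_subset (range_subset_range.mpr i.isLt) fun j _ hj => ?_).trans
    (sum_congr rfl fun j _ => by ring)
  rw [mem_range, not_lt] at hj
  simp [Nat.choose_eq_zero_of_lt (Nat.lt_of_succ_le hj)]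

theorem of_eq_updateCol_leibnizMatrix_submatrix {n : ℕ} (g : 𝕜 → 𝕜) (x : 𝕜)
    (b : Fin (n + 1) → 𝕜) :
    (of fun i j : Fin (n + 1) =>
      if (j : ℕ) = 0 then b i
      else ((i : ℕ).choose ((j : ℕ) - 1) : 𝕜) * iteratedDeriv ((i : ℕ) - ((j : ℕ) - 1)) g x) =
      ((leibnizMatrix n g x).updateCol (Fin.last n) b).submatrix id (finRotate (n + 1)).symm := by
  ext i j
  cases j using Fin.cases with
  | zero =>
    have h0 : (finRotate (n + 1)).symm 0 = Fin.last n :=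
      (Equiv.symm_apply_eq _).mpr (finRotate_last ..).symm
    simp [h0]
  | succ j =>
    have hsucc : (finRotate (n + 1)).symm j.succ = j.castSucc :=
      (Equiv.symm_apply_eq _).mpr (by simp [Fin.coeSucc_eq_succ])
    rw [submatrix_apply, id_eq, hsucc, updateCol_ne (Fin.castSucc_lt_last j).ne]
    simp [leibnizMatrix]

end LeibnizMatrix

theorem deriv_quotient_det (n : ℕ) (μ ν : ℝ → ℝ)
    (hμ : ContDiff ℝ n μ) (hν : ContDiff ℝ n ν) (hne : ∀ x, ν x ≠ 0) (x : ℝ) :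
    iteratedDeriv n (fun t => μ t / ν t) x =
      ((-1 : ℝ) ^ n / ν x ^ (n + 1)) *
        Matrix.det (Matrix.of fun i j : Fin (n + 1) =>
          if (j : ℕ) = 0 then iteratedDeriv (i : ℕ) μ x
          else ((i : ℕ).choose ((j : ℕ) - 1) : ℝ) *
            iteratedDeriv ((i : ℕ) - ((j : ℕ) - 1)) ν x) := by
  have hsystem : leibnizMatrix n ν x *ᵥ (fun j : Fin (n + 1) =>
      iteratedDeriv j (fun t => μ t / ν t) x) = fun i : Fin (n + 1) => iteratedDeriv i μ x := by
    have hμ_eq : (fun t => μ t / ν t) * ν = μ := funext fun t => div_mul_cancel₀ _ (hne t)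
    rw [leibnizMatrix_mulVec (f := fun t => μ t / ν t) (hμ.div hν hne).contDiffAt hν.contDiffAt,
      hμ_eq]
  rw [of_eq_updateCol_leibnizMatrix_submatrix, det_submatrix_finRotate_symm, ← hsystem,
    det_updateCol_mulVec, det_leibnizMatrix, Fin.val_last]
  have hνx : ν x ^ (n + 1) ≠ 0 := pow_ne_zero _ (hne x)
  field_simp
  rw [← pow_mul, mul_comm n 2, pow_mul, neg_one_sq, one_pow, mul_one]
end

section
/- Letting z = 1 in the Apostol–Bernoulli polynomial formula of Luo (valid formally), i.e., the Qi–Chapman closed form, recovers the Jeong–Kim–Son formula: for n ≥ 1, Σ_{i=1}^{n} (-1)^i (C(n+1,i+1)/C(n+i,i)) S(n+i,i) = n! Σ_{j=1}^{n} (-1)^j Σ over (i_1,…,i_n) with Σ i_t = j, Σ t·i_t = n of (j!/(i_1!⋯i_n!)) / (2!^{i_1} 3!^{i_2} ⋯ (n+1)!^{i_n}). -/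
open Finset PowerSeries
open scoped Nat

theorem sum_range_neg_one_pow_mul_choose_mul_choose (N j : ℕ) :
    ∑ k ∈ range (N + 1), (-1 : ℤ) ^ k * N.choose k * k.choose j =
      if N = j then (-1) ^ j else 0 := by
  rcases lt_or_ge N j with hNj | hjN
  · rw [if_neg hNj.ne]
    refine sum_eq_zero fun k hk => ?_
    rw [Nat.choose_eq_zero_of_lt (n := k) (by grind), Nat.cast_zero, mul_zero]
  obtain ⟨r, rfl⟩ := Nat.exists_eq_add_of_le hjN
  have below : ∑ k ∈ range j, (-1 : ℤ) ^ k * (j + r).choose k * k.choose j = 0 :=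
    sum_eq_zero fun k hk => by
      rw [Nat.choose_eq_zero_of_lt (n := k) (by simpa using hk), Nat.cast_zero, mul_zero]
  have shift : ∀ x, (-1 : ℤ) ^ (j + x) * (j + r).choose (j + x) * (j + x).choose j =
      (-1) ^ j * (j + r).choose j * ((-1) ^ x * r.choose x) := fun x => by
    have := Nat.choose_mul (n := j + r) (k := j + x) (s := j) (by omega)
    simp only [Nat.add_sub_cancel_left] at this
    rw [mul_assoc, ← Nat.cast_mul, this, pow_add]
    push_cast
    ring
  rw [add_assoc, sum_range_add, below, zero_add]
  simp_rw [shift, ← mul_sum, Int.alternating_sum_range_choose]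
  split_ifs <;> simp_all

theorem sum_range_neg_one_pow_mul_choose_succ_mul_choose (n j : ℕ) :
    ∑ k ∈ range (n + 1), (-1 : ℤ) ^ k * (n + 1).choose (k + 1) * k.choose j =
      if j ≤ n then (-1) ^ j else 0 := by
  induction n with
  | zero => cases j <;> simp
  | succ n ih =>
    have pascal : ∀ k, (((n + 1 + 1).choose (k + 1) : ℕ) : ℤ) =
        (n + 1).choose (k + 1) + (n + 1).choose k := fun k => by
      rw [Nat.choose_succ_succ', Nat.cast_add, add_comm]
    simp_rw [pascal, mul_add, add_mul, sum_add_distrib]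
    rw [sum_range_succ (fun k => (-1 : ℤ) ^ k * ((n + 1).choose (k + 1) : ℕ) * (k.choose j : ℕ)),
      ih, Nat.choose_succ_self, sum_range_neg_one_pow_mul_choose_mul_choose]
    split_ifs <;> omega

theorem sum_range_neg_one_pow_mul_choose_succ_mul_sum_choose {R : Type*} [CommRing R]
    (a : ℕ → R) (n : ℕ) :
    ∑ k ∈ range (n + 1), (-1 : R) ^ k * (n + 1).choose (k + 1) *
        ∑ j ∈ range (k + 1), k.choose j * a j =
      ∑ j ∈ range (n + 1), (-1) ^ j * a j := by
  have extend : ∀ k ∈ range (n + 1),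
      ∑ j ∈ range (k + 1), (k.choose j : R) * a j = ∑ j ∈ range (n + 1), k.choose j * a j :=
    fun k hk => sum_subset (range_subset_range.2 (by simpa using hk)) fun j _ hj => by
      rw [Nat.choose_eq_zero_of_lt (by simpa using hj), Nat.cast_zero, zero_mul]
  rw [sum_congr rfl fun k hk => congrArg _ (extend k hk)]
  simp_rw [mul_sum]
  rw [sum_comm]
  refine sum_congr rfl fun j hj => ?_
  have := congrArg (Int.cast : ℤ → R) (sum_range_neg_one_pow_mul_choose_succ_mul_choose n j)
  rw [if_pos (by simpa [Nat.lt_succ_iff] using hj)] at this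
  push_cast at this
  rw [← this, sum_mul]
  exact sum_congr rfl fun k _ => by ring

noncomputable def expSubOneSubXDivX : ℚ⟦X⟧ :=
  mk fun a => if a = 0 then 0 else ((a + 1)! : ℚ)⁻¹

theorem X_mul_one_add_expSubOneSubXDivX : X * (1 + expSubOneSubXDivX) = exp ℚ - 1 := by
  ext (_ | _ | a) <;> simp [expSubOneSubXDivX, coeff_exp, coeff_succ_X_mul, coeff_one]

theorem succ_mul_coeff_succ_exp_sub_one_pow (n k : ℕ) :
    ((n : ℚ) + 1) * coeff (n + 1) ((exp ℚ - 1) ^ (k + 1)) =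
      ((k : ℚ) + 1) * (coeff n ((exp ℚ - 1) ^ (k + 1)) + coeff n ((exp ℚ - 1) ^ k)) := by
  have hd : d⁄dX ℚ ((exp ℚ - 1) ^ (k + 1)) =
      (k + 1 : ℚ) • ((exp ℚ - 1) ^ (k + 1) + (exp ℚ - 1) ^ k) := by
    rw [Derivation.leibniz_pow, map_sub, derivative_exp, derivative_one]
    rw [Nat.add_sub_cancel, sub_zero, smul_eq_mul, ← Nat.cast_smul_eq_nsmul ℚ]
    push_cast
    congr 1
    ring
  have := congrArg (coeff n) hd
  rw [coeff_derivative, map_smul, map_add] at this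
  linear_combination this

theorem factorial_mul_stirling_eq_coeff_exp_sub_one_pow (n k : ℕ) :
    (k ! * stirling n k : ℚ) = n ! * coeff n ((exp ℚ - 1) ^ k) := by
  induction n generalizing k with
  | zero => cases k <;> simp [stirling]
  | succ n ih =>
    cases k with
    | zero => simp [stirling, coeff_one]
    | succ k =>
      have ih' := ih (k + 1)
      simp only [stirling, Nat.factorial_succ] at ih' ⊢
      push_cast at ih' ⊢
      linear_combination (k + 1) * ih' + (k + 1) * ih k -
        (n ! : ℚ) * succ_mul_coeff_succ_exp_sub_one_pow n k

theorem coeff_add_exp_sub_one_pow (m k : ℕ) :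
    coeff (m + k) ((exp ℚ - 1) ^ k) =
      ∑ j ∈ range (k + 1), k.choose j * coeff m (expSubOneSubXDivX ^ j) := by
  rw [← X_mul_one_add_expSubOneSubXDivX, mul_pow, coeff_X_pow_mul, add_comm, add_pow, map_sum]
  refine sum_congr rfl fun j _ => ?_
  rw [one_pow, mul_one, ← map_natCast (C (R := ℚ)), coeff_mul_C, mul_comm]

theorem stirling_add_div_choose (m k : ℕ) :
    (stirling (m + k) k : ℚ) / (m + k).choose k =
      m ! * ∑ j ∈ range (k + 1), k.choose j * coeff m (expSubOneSubXDivX ^ j) := by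
  have hS := factorial_mul_stirling_eq_coeff_exp_sub_one_pow (m + k) k
  rw [coeff_add_exp_sub_one_pow, ← Nat.add_choose_mul_factorial_mul_factorial m k] at hS
  have hC : ((m + k).choose k : ℚ) ≠ 0 := by exact_mod_cast (Nat.choose_pos (by omega)).ne'
  rw [div_eq_iff hC]
  push_cast at hS
  have hk : (k ! : ℚ) ≠ 0 := by positivity
  apply mul_left_cancel₀ hk
  linear_combination hS

theorem coeff_pow_eq_coeff_trunc_pow {R : Type*} [CommSemiring R] (f : R⟦X⟧) {m n : ℕ}
    (h : m < n) (j : ℕ) : coeff m (f ^ j) = ((trunc n f) ^ j).coeff m := by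
  rw [← coeff_coe_trunc_of_lt h, ← trunc_trunc_pow, coeff_coe_trunc_of_lt h, ← Polynomial.coe_pow,
    Polynomial.coeff_coe]

theorem trunc_succ_expSubOneSubXDivX (n : ℕ) :
    trunc (n + 1) expSubOneSubXDivX =
      ∑ t : Fin n, Polynomial.C (((t : ℕ) + 2)! : ℚ)⁻¹ * Polynomial.X ^ ((t : ℕ) + 1) := by
  rw [trunc_apply, ← range_eq_Ico, sum_range_succ', Fin.sum_univ_eq_sum_range
    (fun t => Polynomial.C (((t : ℕ) + 2)! : ℚ)⁻¹ * Polynomial.X ^ (t + 1))]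
  simp [expSubOneSubXDivX, Polynomial.C_mul_X_pow_eq_monomial]

theorem coeff_sum_C_mul_X_pow_pow {R ι : Type*} [CommSemiring R] [Fintype ι] [DecidableEq ι]
    (c : ι → R) (e : ι → ℕ) (j m : ℕ) :
    ((∑ t, Polynomial.C (c t) * Polynomial.X ^ e t) ^ j).coeff m =
      ∑ k ∈ univ.piAntidiag j,
        if ∑ t, e t * k t = m then Nat.multinomial univ k * ∏ t, c t ^ k t else 0 := by
  rw [sum_pow_eq_sum_piAntidiag, Polynomial.finsetSum_coeff]
  refine sum_congr rfl fun k _ => ?_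
  simp_rw [mul_pow, ← Polynomial.C_pow, ← pow_mul, prod_mul_distrib, ← map_prod,
    prod_pow_eq_pow_sum, ← Polynomial.C_eq_natCast, ← mul_assoc, ← Polynomial.C_mul,
    Polynomial.coeff_C_mul_X_pow, eq_comm]

theorem multinomial_mul_prod_inv_pow {ι K : Type*} [Field K] [CharZero K] (s : Finset ι)
    (k : ι → ℕ) (a : ι → K) :
    (Nat.multinomial s k : K) * ∏ t ∈ s, (a t)⁻¹ ^ k t =
      (∑ t ∈ s, k t)! / (∏ t ∈ s, ((k t)! : K)) / ∏ t ∈ s, a t ^ k t := by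
  have hk : ∏ t ∈ s, ((k t)! : K) ≠ 0 :=
    prod_ne_zero_iff.2 fun t _ => Nat.cast_ne_zero.2 (Nat.factorial_ne_zero _)
  have spec : (∏ t ∈ s, ((k t)! : K)) * Nat.multinomial s k = (∑ t ∈ s, k t)! := by
    exact_mod_cast Nat.multinomial_spec s k
  rw [← spec, mul_div_cancel_left₀ _ hk]
  simp_rw [inv_pow, prod_inv_distrib, div_eq_mul_inv]

theorem coeff_pow_expSubOneSubXDivX {n m : ℕ} (hm : m ≤ n) (j : ℕ) :
    coeff m (expSubOneSubXDivX ^ j) =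
      ∑ i : Fin n → Fin (n + 1),
        if (∑ t, (i t : ℕ)) = j ∧ (∑ t : Fin n, ((t : ℕ) + 1) * (i t : ℕ)) = m then
          (j ! : ℚ) / (∏ t, ((i t : ℕ)! : ℚ)) / ∏ t : Fin n, (((t : ℕ) + 2)! : ℚ) ^ (i t : ℕ)
        else 0 := by
  rw [coeff_pow_eq_coeff_trunc_pow _ (Nat.lt_succ_of_le hm), trunc_succ_expSubOneSubXDivX,
    coeff_sum_C_mul_X_pow_pow]
  symm
  refine sum_bij_ne_zero (fun i _ _ t => (i t : ℕ)) ?_ ?_ ?_ ?_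
  · intro i _ hi
    simpa [mem_piAntidiag] using ((ite_ne_right_iff.1 hi).1).1
  · exact fun i₁ _ _ i₂ _ _ h => funext fun t => Fin.ext (congrFun h t)
  · intro k hk hne
    have hkj : ∑ t, k t = j := (mem_piAntidiag.1 hk).1
    have hkm : ∑ t : Fin n, ((t : ℕ) + 1) * k t = m := (ite_ne_right_iff.1 hne).1
    have hk_le : ∀ t, k t < n + 1 := fun t => by
      have := single_le_sum (f := fun t : Fin n => ((t : ℕ) + 1) * k t) (by simp) (mem_univ t)
      nlinarith
    refine ⟨fun t => ⟨k t, hk_le t⟩, mem_univ _, ?_, rfl⟩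
    rw [if_pos ⟨hkj, hkm⟩]
    positivity
  · intro i _ hi
    obtain ⟨⟨hj, hm⟩, -⟩ := ite_ne_right_iff.1 hi
    rw [if_pos ⟨hj, hm⟩, if_pos hm, multinomial_mul_prod_inv_pow, hj]

theorem qiChapman_recovers_JeongKimSon (n : ℕ) (hn : 1 ≤ n) :
    (∑ i ∈ Finset.Icc 1 n,
        (-1 : ℚ) ^ i * (((n + 1).choose (i + 1) : ℚ) / ((n + i).choose i : ℚ)) *
          (stirling (n + i) i : ℚ)) =
      (n.factorial : ℚ) * ∑ j ∈ Finset.Icc 1 n, (-1 : ℚ) ^ j *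
        ∑ i : Fin n → Fin (n + 1),
          if (∑ t : Fin n, (i t : ℕ)) = j ∧ (∑ t : Fin n, ((t : ℕ) + 1) * (i t : ℕ)) = n then
            (j.factorial : ℚ) / (∏ t : Fin n, ((i t : ℕ).factorial : ℚ)) /
              (∏ t : Fin n, (((t : ℕ) + 2).factorial : ℚ) ^ (i t : ℕ))
          else 0 := by
  set a : ℕ → ℚ := fun j => coeff n (expSubOneSubXDivX ^ j)
  have ha0 : a 0 = 0 := by simp [a, coeff_one, Nat.one_le_iff_ne_zero.1 hn]
  have transform := sum_range_neg_one_pow_mul_choose_succ_mul_sum_choose a n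
  have hpos : 0 < n + 1 := n.zero_lt_succ
  rw [range_eq_Ico, sum_eq_sum_Ico_succ_bot hpos, sum_eq_sum_Ico_succ_bot hpos, zero_add,
    Ico_add_one_right_eq_Icc] at transform
  simp only [sum_range_one, ha0, mul_zero, zero_add] at transform
  simp_rw [← coeff_pow_expSubOneSubXDivX le_rfl]
  calc _ = ∑ k ∈ Icc 1 n, (n ! : ℚ) * ((-1) ^ k * (n + 1).choose (k + 1) *
        ∑ j ∈ range (k + 1), k.choose j * a j) := sum_congr rfl fun k _ => by
          rw [mul_div_assoc', div_mul_eq_mul_div, mul_div_assoc, stirling_add_div_choose]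
          ring
    _ = _ := by rw [← mul_sum, transform]
end
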